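/- Over C, the group of matrices of the form (a_{ij})_{0≤i,j≤4} with a_{i0}=0 for i≥1, a_{1j}=0 for j≠1, a_{2j}=0 for j≠2, a_{3j}=0 for j∉{1,3}, a_{4j}=0 for j∉{1,4}, a_{00}a_{11}a_{22}=1, a_{33}^2 a_{44}=1, has dimension 9 as an algebraic variety: it is parametrized bijectively by (a_{01},a_{02},a_{03},a_{04},a_{11},a_{22},a_{31},a_{33},a_{41}) ∈ C^4 × (C^*)^2 × C × C^* × C. -/

import Mathlib

/-!
The nine parameters are entries of `paramD5A1 v`, so reading them off is a left inverse.
Conversely, on a matrix of the prescribed shape the two relations solve for `a₀₀` and `a₄₄`,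
and expanding the determinant gives `a₀₀a₁₁a₂₂a₃₃a₄₄ = a₃₃⁻¹ ≠ 0`.
-/

open Matrix

def GD5A1 : Set (Matrix (Fin 5) (Fin 5) ℂ) :=
  {A | A.det ≠ 0 ∧
    (∀ i : Fin 5, i ≠ 0 → A i 0 = 0) ∧
    (∀ j : Fin 5, j ≠ 1 → A 1 j = 0) ∧
    (∀ j : Fin 5, j ≠ 2 → A 2 j = 0) ∧
    (∀ j : Fin 5, j ≠ 1 → j ≠ 3 → A 3 j = 0) ∧
    (∀ j : Fin 5, j ≠ 1 → j ≠ 4 → A 4 j = 0) ∧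
    A 0 0 * A 1 1 * A 2 2 = 1 ∧ A 3 3 ^ 2 * A 4 4 = 1}

noncomputable def paramD5A1 (v : Fin 9 → ℂ) : Matrix (Fin 5) (Fin 5) ℂ :=
  !![(v 4 * v 5)⁻¹, v 0, v 1, v 2, v 3;
     0, v 4, 0, 0, 0;
     0, 0, v 5, 0, 0;
     0, v 6, 0, v 7, 0;
     0, v 8, 0, 0, (v 7 ^ 2)⁻¹]

def coordsD5A1 (A : Matrix (Fin 5) (Fin 5) ℂ) : Fin 9 → ℂ :=
  ![A 0 1, A 0 2, A 0 3, A 0 4, A 1 1, A 2 2, A 3 1, A 3 3, A 4 1]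

theorem coordsD5A1_paramD5A1 (v : Fin 9 → ℂ) : coordsD5A1 (paramD5A1 v) = v := by
  ext k
  fin_cases k <;> rfl

theorem det_paramD5A1 {v : Fin 9 → ℂ} (h4 : v 4 ≠ 0) (h5 : v 5 ≠ 0) :
    (paramD5A1 v).det = (v 7)⁻¹ := by
  simp [paramD5A1, det_succ_row_zero, Fin.sum_univ_succ]
  field_simp

theorem paramD5A1_mem {v : Fin 9 → ℂ} (h4 : v 4 ≠ 0) (h5 : v 5 ≠ 0) (h7 : v 7 ≠ 0) :
    paramD5A1 v ∈ GD5A1 := by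
  refine ⟨by simpa [det_paramD5A1 h4 h5], ?_, ?_, ?_, ?_, ?_, ?_, ?_⟩
  · intro i hi; fin_cases i <;> simp_all [paramD5A1]
  · intro j hj; fin_cases j <;> simp_all [paramD5A1]
  · intro j hj; fin_cases j <;> simp_all [paramD5A1]
  · intro j hj₁ hj₃; fin_cases j <;> simp_all [paramD5A1]
  · intro j hj₁ hj₄; fin_cases j <;> simp_all [paramD5A1]
  · simp [paramD5A1]; field_simp
  · simp [paramD5A1]; field_simp

theorem coordsD5A1_mem {A : Matrix (Fin 5) (Fin 5) ℂ} (hA : A ∈ GD5A1) :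
    coordsD5A1 A 4 ≠ 0 ∧ coordsD5A1 A 5 ≠ 0 ∧ coordsD5A1 A 7 ≠ 0 := by
  obtain ⟨-, -, -, -, -, -, h012, h34⟩ := hA
  refine ⟨?_, ?_, ?_⟩ <;> intro h <;> simp_all [coordsD5A1]

theorem paramD5A1_coordsD5A1 {A : Matrix (Fin 5) (Fin 5) ℂ} (hA : A ∈ GD5A1) :
    paramD5A1 (coordsD5A1 A) = A := by
  obtain ⟨-, hcol0, hrow1, hrow2, hrow3, hrow4, h012, h34⟩ := hA
  have h00 : A 0 0 = (A 1 1 * A 2 2)⁻¹ := eq_inv_of_mul_eq_one_left (by rw [← mul_assoc, h012])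
  have h44 : A 4 4 = (A 3 3 ^ 2)⁻¹ := eq_inv_of_mul_eq_one_right h34
  ext i j
  fin_cases i <;> fin_cases j <;> simp [paramD5A1, coordsD5A1, *]

/-- The group `GD5A1` is a 9-dimensional variety: it is parametrized bijectively by
`(a₀₁,a₀₂,a₀₃,a₀₄,a₁₁,a₂₂,a₃₁,a₃₃,a₄₁) ∈ ℂ⁴ × (ℂ*)² × ℂ × ℂ* × ℂ`. -/
theorem GD5A1_dimension :
    Set.InjOn paramD5A1 {v | v 4 ≠ 0 ∧ v 5 ≠ 0 ∧ v 7 ≠ 0} ∧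
    paramD5A1 '' {v | v 4 ≠ 0 ∧ v 5 ≠ 0 ∧ v 7 ≠ 0} = GD5A1 := by
  have hbij : Set.BijOn paramD5A1 {v | v 4 ≠ 0 ∧ v 5 ≠ 0 ∧ v 7 ≠ 0} GD5A1 :=
    Set.InvOn.bijOn (f' := coordsD5A1)
      ⟨fun v _ => coordsD5A1_paramD5A1 v, fun _ hA => paramD5A1_coordsD5A1 hA⟩
      (fun _ ⟨h4, h5, h7⟩ => paramD5A1_mem h4 h5 h7) (fun _ hA => coordsD5A1_mem hA)
  exact ⟨hbij.injOn, hbij.image_eq⟩
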